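/- arXiv:math/0212299 — 4 statements merged into one kernel-verified Lean document; each statement's English description precedes it below -/
import Mathlib

section
/- The trigonometric polynomial f₂(α,β,γ) = |−exp(iβ) + exp(i(α+γ))|² = 2 − 2·cos(α−β+γ) is extremal in Q(1,1,1): whenever f₂ = g + h with g, h ∈ Q(1,1,1), there exists a real constant c ≥ 0 with g = c·f₂. -/
open Complex ComplexOrder

noncomputable section

/-- The lattice box `S(1,1,1) = {0,1}³`. -/
def Sbox (N₁ N₂ N₃ : ℕ) : Finset (ℤ × ℤ × ℤ) :=
  Finset.Icc (0, 0, 0) ((N₁ : ℤ), (N₂ : ℤ), (N₃ : ℤ))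

/-- The character `exp(i(kα + ℓβ + mγ))`. -/
def eChar (δ : ℤ × ℤ × ℤ) (v : ℝ × ℝ × ℝ) : ℂ :=
  Complex.exp (Complex.I *
    ((δ.1 : ℂ) * (v.1 : ℂ) + (δ.2.1 : ℂ) * (v.2.1 : ℂ) + (δ.2.2 : ℂ) * (v.2.2 : ℂ)))

/-- `Q(N₁,N₂,N₃)`: finite sums of squared moduli of trig polynomials with frequencies in `S`. -/
def QSet (N₁ N₂ N₃ : ℕ) : Set ((ℝ × ℝ × ℝ) → ℂ) :=
  { f | ∃ (r : ℕ) (q : Fin r → (ℤ × ℤ × ℤ) → ℂ),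
      f = fun v => ∑ j, (‖∑ p ∈ Sbox N₁ N₂ N₃, q j p * eChar p v‖ : ℂ) ^ 2 }

lemma Sbox_eq : Sbox 1 1 1 = ({(0,0,0),(0,0,1),(0,1,0),(0,1,1),(1,0,0),(1,0,1),(1,1,0),(1,1,1)} : Finset (ℤ×ℤ×ℤ)) := by
  show Finset.Icc ((0:ℤ),(0:ℤ),(0:ℤ)) (((1:ℕ):ℤ),((1:ℕ):ℤ),((1:ℕ):ℤ)) = _
  norm_num
  decide

lemma sum8 (c : ℤ×ℤ×ℤ → ℂ) (v : ℝ×ℝ×ℝ) :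
    ∑ p ∈ Sbox 1 1 1, c p * eChar p v =
      c (0,0,0) * eChar (0,0,0) v + c (0,0,1) * eChar (0,0,1) v + c (0,1,0) * eChar (0,1,0) v
      + c (0,1,1) * eChar (0,1,1) v + c (1,0,0) * eChar (1,0,0) v + c (1,0,1) * eChar (1,0,1) v
      + c (1,1,0) * eChar (1,1,0) v + c (1,1,1) * eChar (1,1,1) v := by
  rw [Sbox_eq, Finset.sum_insert (by decide), Finset.sum_insert (by decide),
    Finset.sum_insert (by decide), Finset.sum_insert (by decide), Finset.sum_insert (by decide),
    Finset.sum_insert (by decide), Finset.sum_insert (by decide), Finset.sum_singleton]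
  ring

lemma echar_eval (k l m : ℤ) (α γ : ℝ) :
    eChar (k,l,m) (α, α+γ, γ)
      = Complex.exp (Complex.I*α) ^ (k+l) * Complex.exp (Complex.I*γ) ^ (l+m) := by
  unfold eChar
  rw [← Complex.exp_int_mul, ← Complex.exp_int_mul, ← Complex.exp_add]
  push_cast
  ring_nf

lemma expandE (c : ℤ×ℤ×ℤ → ℂ) (α γ : ℝ) :
    ∑ p ∈ Sbox 1 1 1, c p * eChar p (α, α+γ, γ) =
      c (0,0,0) + c (0,0,1) * Complex.exp (Complex.I*γ)
      + c (0,1,0) * (Complex.exp (Complex.I*α) * Complex.exp (Complex.I*γ))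
      + c (0,1,1) * (Complex.exp (Complex.I*α) * Complex.exp (Complex.I*γ)^2)
      + c (1,0,0) * Complex.exp (Complex.I*α)
      + c (1,0,1) * (Complex.exp (Complex.I*α) * Complex.exp (Complex.I*γ))
      + c (1,1,0) * (Complex.exp (Complex.I*α)^2 * Complex.exp (Complex.I*γ))
      + c (1,1,1) * (Complex.exp (Complex.I*α)^2 * Complex.exp (Complex.I*γ)^2) := by
  rw [sum8]
  rw [echar_eval 0 0 0, echar_eval 0 0 1, echar_eval 0 1 0, echar_eval 0 1 1,
    echar_eval 1 0 0, echar_eval 1 0 1, echar_eval 1 1 0, echar_eval 1 1 1]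
  norm_num [zpow_ofNat]

lemma exp_zero' : Complex.exp (Complex.I * ((0:ℝ):ℂ)) = 1 := by norm_num
lemma exp_pi' : Complex.exp (Complex.I * ((Real.pi:ℝ):ℂ)) = -1 := by
  rw [mul_comm]; exact Complex.exp_pi_mul_I
lemma exp_half' : Complex.exp (Complex.I * ((Real.pi/2:ℝ):ℂ)) = Complex.I := by
  rw [mul_comm]; push_cast; rw [Complex.exp_mul_I]; simp

lemma coeffs_of_vanish (c : ℤ×ℤ×ℤ → ℂ)
    (hv : ∀ α γ : ℝ, ∑ p ∈ Sbox 1 1 1, c p * eChar p (α, α+γ, γ) = 0) (v : ℝ×ℝ×ℝ) :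
    ∑ p ∈ Sbox 1 1 1, c p * eChar p v
      = c (0,1,0) * (eChar (0,1,0) v - eChar (1,0,1) v) := by
  have e : ∀ α γ : ℝ,
      c (0,0,0) + c (0,0,1) * Complex.exp (Complex.I*γ)
      + c (0,1,0) * (Complex.exp (Complex.I*α) * Complex.exp (Complex.I*γ))
      + c (0,1,1) * (Complex.exp (Complex.I*α) * Complex.exp (Complex.I*γ)^2)
      + c (1,0,0) * Complex.exp (Complex.I*α)
      + c (1,0,1) * (Complex.exp (Complex.I*α) * Complex.exp (Complex.I*γ))
      + c (1,1,0) * (Complex.exp (Complex.I*α)^2 * Complex.exp (Complex.I*γ))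
      + c (1,1,1) * (Complex.exp (Complex.I*α)^2 * Complex.exp (Complex.I*γ)^2) = 0 :=
    fun α γ => (expandE c α γ).symm.trans (hv α γ)
  have h00 := e 0 0
  have h01 := e 0 Real.pi
  have h02 := e 0 (Real.pi/2)
  have h10 := e Real.pi 0
  have h11 := e Real.pi Real.pi
  have h12 := e Real.pi (Real.pi/2)
  have h20 := e (Real.pi/2) 0
  have h21 := e (Real.pi/2) Real.pi
  have h22 := e (Real.pi/2) (Real.pi/2)
  simp only [exp_zero', exp_pi', exp_half', Complex.I_sq, Complex.I_mul_I, one_pow, one_mul,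
    mul_one, neg_one_sq, mul_neg, neg_mul, neg_neg, mul_neg_one, neg_one_mul]
    at h00 h01 h02 h10 h11 h12 h20 h21 h22
  have hd0_0 : c (0,0,0) + c (0,0,1) = 0 := by
    linear_combination (1/4 - Complex.I/4)*h00 + (1/4 + Complex.I/4)*h10 + h20/2
  have hd0_1 : c (0,0,0) - c (0,0,1) = 0 := by
    linear_combination (1/4 - Complex.I/4)*h01 + (1/4 + Complex.I/4)*h11 + h21/2
  have hd0_2 : c (0,0,0) + c (0,0,1) * Complex.I = 0 := by
    linear_combination (1/4 - Complex.I/4)*h02 + (1/4 + Complex.I/4)*h12 + h22/2 + (c (0,1,0) + c (1,0,1))/2 * Complex.I_sq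
  have hd1_0 : c (1,0,0) + (c (0,1,0) + c (1,0,1)) + c (0,1,1) = 0 := by
    linear_combination (h00 - h10)/2
  have hd1_1 : c (1,0,0) - (c (0,1,0) + c (1,0,1)) + c (0,1,1) = 0 := by
    linear_combination (h01 - h11)/2
  have hd1_2 : c (1,0,0) + (c (0,1,0) + c (1,0,1)) * Complex.I - c (0,1,1) = 0 := by
    linear_combination (h02 - h12)/2
  have hd2_0 : c (1,1,0) + c (1,1,1) = 0 := by
    linear_combination (1/4 + Complex.I/4)*h00 + (1/4 - Complex.I/4)*h10 - h20/2
  have hd2_1 : -c (1,1,0) + c (1,1,1) = 0 := by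
    linear_combination (1/4 + Complex.I/4)*h01 + (1/4 - Complex.I/4)*h11 - h21/2
  have hd2_2 : c (1,1,0) * Complex.I - c (1,1,1) = 0 := by
    linear_combination (1/4 + Complex.I/4)*h02 + (1/4 - Complex.I/4)*h12 - h22/2 - (c (0,1,0) + c (1,0,1))/2 * Complex.I_sq
  have hc000 : c (0,0,0) = 0 := by
    linear_combination (1/4 - Complex.I/4)*hd0_0 + (1/4 + Complex.I/4)*hd0_1 + hd0_2/2
  have hc001 : c (0,0,1) = 0 := by linear_combination (hd0_0 - hd0_1)/2
  have hc100 : c (1,0,0) = 0 := by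
    linear_combination (1/4 - Complex.I/4)*hd1_0 + (1/4 + Complex.I/4)*hd1_1 + hd1_2/2
  have hsum : c (0,1,0) + c (1,0,1) = 0 := by linear_combination (hd1_0 - hd1_1)/2
  have hc011 : c (0,1,1) = 0 := by
    linear_combination (1/4 + Complex.I/4)*hd1_0 + (1/4 - Complex.I/4)*hd1_1 - hd1_2/2
  have hc110 : c (1,1,0) = 0 := by linear_combination (hd2_0 - hd2_1)/2
  have hc111 : c (1,1,1) = 0 := by
    linear_combination (1/4 + Complex.I/4)*hd2_0 + (1/4 - Complex.I/4)*hd2_1 - hd2_2/2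
  rw [sum8]
  linear_combination eChar (0,0,0) v * hc000 + eChar (0,0,1) v * hc001
    + eChar (0,1,1) v * hc011 + eChar (1,0,0) v * hc100 + eChar (1,1,0) v * hc110
    + eChar (1,1,1) v * hc111 + eChar (1,0,1) v * hsum

/-- Proposition 3: the trigonometric polynomial f₂(α,β,γ) = |−e^{iβ} + e^{i(α+γ)}|² = 2 − 2cos(α−β+γ)
is extremal in `Q(1,1,1)`. -/
theorem extremal_f2 (f₂ : ℝ × ℝ × ℝ → ℂ)
    (hf : f₂ = fun v => (‖-Complex.exp (Complex.I * (v.2.1 : ℂ)) + Complex.exp (Complex.I * ((v.1 : ℂ) + (v.2.2 : ℂ)))‖ : ℂ) ^ 2) :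
    ∀ g h : (ℝ × ℝ × ℝ) → ℂ, g ∈ QSet 1 1 1 → h ∈ QSet 1 1 1 → f₂ = g + h →
      ∃ c : ℝ, 0 ≤ c ∧ g = fun v => (c : ℂ) * f₂ v := by
  intro g h hgQ hhQ heq
  obtain ⟨rg, qg, hg⟩ := hgQ
  obtain ⟨rh, qh, hh⟩ := hhQ
  subst hf hg hh
  have key : ∀ (j : Fin rg) (α γ : ℝ),
      ∑ p ∈ Sbox 1 1 1, qg j p * eChar p (α, α+γ, γ) = 0 := by
    intro j α γ
    have hs := congrFun heq (α, α+γ, γ)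
    simp only [Pi.add_apply] at hs
    have h0 : (‖-Complex.exp (Complex.I * ((α+γ:ℝ):ℂ))
        + Complex.exp (Complex.I * ((α:ℂ)+(γ:ℂ)))‖ : ℂ)^2 = 0 := by
      push_cast
      simp
    rw [h0] at hs
    have hr : (∑ j, ‖∑ p ∈ Sbox 1 1 1, qg j p * eChar p (α, α+γ, γ)‖^2)
        + (∑ j', ‖∑ p ∈ Sbox 1 1 1, qh j' p * eChar p (α, α+γ, γ)‖^2) = 0 := by
      exact_mod_cast hs.symm
    have n1 : (0:ℝ) ≤ ∑ j, ‖∑ p ∈ Sbox 1 1 1, qg j p * eChar p (α, α+γ, γ)‖^2 :=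
      Finset.sum_nonneg fun _ _ => sq_nonneg _
    have n2 : (0:ℝ) ≤ ∑ j', ‖∑ p ∈ Sbox 1 1 1, qh j' p * eChar p (α, α+γ, γ)‖^2 :=
      Finset.sum_nonneg fun _ _ => sq_nonneg _
    have hz : (∑ j, ‖∑ p ∈ Sbox 1 1 1, qg j p * eChar p (α, α+γ, γ)‖^2) = 0 := by linarith
    have := (Finset.sum_eq_zero_iff_of_nonneg (fun i _ => sq_nonneg _)).1 hz j (Finset.mem_univ j)
    exact norm_eq_zero.1 (sq_eq_zero_iff.mp this)
  have hcoef : ∀ (j : Fin rg) (v : ℝ×ℝ×ℝ),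
      ∑ p ∈ Sbox 1 1 1, qg j p * eChar p v
        = qg j (0,1,0) * (eChar (0,1,0) v - eChar (1,0,1) v) :=
    fun j v => coeffs_of_vanish (qg j) (fun α γ => key j α γ) v
  refine ⟨∑ j, ‖qg j (0,1,0)‖^2, Finset.sum_nonneg fun _ _ => sq_nonneg _, ?_⟩
  funext v
  simp only [hcoef]
  have hb : eChar (0,1,0) v - eChar (1,0,1) v
      = -(-Complex.exp (Complex.I * (v.2.1 : ℂ))
          + Complex.exp (Complex.I * ((v.1 : ℂ) + (v.2.2 : ℂ)))) := by
    unfold eChar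
    rw [show ((((0:ℤ):ℂ)) * (v.1:ℂ) + ((1:ℤ):ℂ) * (v.2.1:ℂ) + ((0:ℤ):ℂ) * (v.2.2:ℂ)) = (v.2.1:ℂ) by push_cast; ring,
      show ((((1:ℤ):ℂ)) * (v.1:ℂ) + ((0:ℤ):ℂ) * (v.2.1:ℂ) + ((1:ℤ):ℂ) * (v.2.2:ℂ)) = ((v.1:ℂ) + (v.2.2:ℂ)) by push_cast; ring]
    ring
  rw [hb]
  simp only [norm_neg, norm_mul]
  push_cast
  rw [Finset.sum_mul]
  exact Finset.sum_congr rfl fun j _ => by ring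
end
end

section
/- The trigonometric polynomial f₄(α,β,γ) = |−1 + exp(i(α+β+γ))|² = 2 − 2·cos(α+β+γ) is extremal in Q(1,1,1): whenever f₄ = g + h with g, h ∈ Q(1,1,1), there exists a real constant c ≥ 0 with g = c·f₄. -/
open Complex ComplexOrder

noncomputable section

open Real in
lemma expI_aux (n : ℤ) : Complex.exp (Complex.I * ((n * (π/2) : ℝ) : ℂ)) = Complex.I ^ n := by
  rw [show (Complex.I * ((n * (π/2) : ℝ) : ℂ)) = n * (((π/2 : ℝ):ℂ) * Complex.I) by
      push_cast; ring,
    Complex.exp_int_mul]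
  congr 1
  rw [Complex.exp_mul_I, ← Complex.ofReal_cos, ← Complex.ofReal_sin, Real.cos_pi_div_two,
    Real.sin_pi_div_two]
  simp

lemma sum_Sbox111 (q : ℤ × ℤ × ℤ → ℂ) (v : ℝ × ℝ × ℝ) :
    ∑ p ∈ Sbox 1 1 1, q p * eChar p v =
      q (0,0,0) * eChar (0,0,0) v + q (0,0,1) * eChar (0,0,1) v +
      q (0,1,0) * eChar (0,1,0) v + q (0,1,1) * eChar (0,1,1) v +
      q (1,0,0) * eChar (1,0,0) v + q (1,0,1) * eChar (1,0,1) v +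
      q (1,1,0) * eChar (1,1,0) v + q (1,1,1) * eChar (1,1,1) v := by
  rw [show Sbox 1 1 1 =
      {(0,0,0),(0,0,1),(0,1,0),(0,1,1),(1,0,0),(1,0,1),(1,1,0),(1,1,1)} from by decide]
  rw [show ({(0,0,0),(0,0,1),(0,1,0),(0,1,1),(1,0,0),(1,0,1),(1,1,0),(1,1,1)} :
      Finset (ℤ × ℤ × ℤ)) =
      insert (0,0,0) (insert (0,0,1) (insert (0,1,0) (insert (0,1,1) (insert (1,0,0)
        (insert (1,0,1) (insert (1,1,0) {(1,1,1)})))))) from rfl]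
  repeat rw [Finset.sum_insert (by decide)]
  rw [Finset.sum_singleton]
  ring

open Real in
lemma eChar_pt (k l m a' b' : ℤ) :
    eChar (k,l,m) ((a' * (π/2) : ℝ), (b' * (π/2) : ℝ), -(a' * (π/2)) - b' * (π/2)) =
      Complex.I ^ (k*a' + l*b' + m*(-a'-b')) := by
  rw [← expI_aux (k*a' + l*b' + m*(-a'-b'))]
  unfold eChar
  congr 1
  push_cast
  ring

open Real in
lemma vanish_key (q : ℤ × ℤ × ℤ → ℂ)
    (h : ∀ a b : ℝ, ∑ p ∈ Sbox 1 1 1, q p * eChar p (a, b, -a-b) = 0) :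
    ∀ v : ℝ × ℝ × ℝ, ‖∑ p ∈ Sbox 1 1 1, q p * eChar p v‖ =
      ‖q (0,0,0)‖ * ‖(-1 : ℂ) + Complex.exp (Complex.I * ((v.1 : ℂ) + (v.2.1 : ℂ) + (v.2.2 : ℂ)))‖ := by
  have key : ∀ a' b' : ℤ,
      q (0,0,0) * Complex.I ^ (0*a' + 0*b' + 0*(-a'-b')) +
      q (0,0,1) * Complex.I ^ (0*a' + 0*b' + 1*(-a'-b')) +
      q (0,1,0) * Complex.I ^ (0*a' + 1*b' + 0*(-a'-b')) +
      q (0,1,1) * Complex.I ^ (0*a' + 1*b' + 1*(-a'-b')) +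
      q (1,0,0) * Complex.I ^ (1*a' + 0*b' + 0*(-a'-b')) +
      q (1,0,1) * Complex.I ^ (1*a' + 0*b' + 1*(-a'-b')) +
      q (1,1,0) * Complex.I ^ (1*a' + 1*b' + 0*(-a'-b')) +
      q (1,1,1) * Complex.I ^ (1*a' + 1*b' + 1*(-a'-b')) = 0 := by
    intro a' b'
    have h0 := h (a' * (π/2)) (b' * (π/2))
    rw [sum_Sbox111] at h0
    simpa only [eChar_pt] using h0
  have i1 : (Complex.I)^(1:ℤ) = Complex.I := zpow_one _
  have i2 : (Complex.I)^(2:ℤ) = -1 := by norm_num [zpow_two]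
  have in1 : (Complex.I)^(-1:ℤ) = -Complex.I := by norm_num [zpow_neg]
  have in2 : (Complex.I)^(-2:ℤ) = -1 := by norm_num [zpow_neg, zpow_two]
  have i4 : (Complex.I)^(4:ℤ) = 1 := by
    rw [show (4:ℤ)=2+2 by norm_num, zpow_add₀ Complex.I_ne_zero]
    norm_num [zpow_two]
  have in4 : (Complex.I)^(-4:ℤ) = 1 := by
    rw [show (-4:ℤ) = -(4:ℤ) by norm_num, zpow_neg, i4]; norm_num
  have isq : Complex.I^2 = -1 := Complex.I_sq
  have e1 := key 0 0
  have e2 := key 2 0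
  have e3 := key 0 2
  have e4 := key 2 2
  have e5 := key 1 0
  have e6 := key 0 1
  have e7 := key 1 1
  norm_num [i1, i2, i4, in1, in2, in4, zpow_zero] at e1 e2 e3 e4 e5 e6 e7
  have hA : q (1,1,1) = - q (0,0,0) := by
    linear_combination (1/4 : ℂ) * e1 + (1/4 : ℂ) * e2 + (1/4 : ℂ) * e3 + (1/4 : ℂ) * e4
  have h001 : q (0,0,1) = 0 := by
    linear_combination (1/8 - Complex.I/4) * e1 - (1/8 : ℂ) * e2 - (1/8 : ℂ) * e3 +
      (1/8 : ℂ) * e4 + (Complex.I/4) * e5 + (Complex.I/4) * e6 - (Complex.I/4) * e7 +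
      ((q (0,0,1) - q (1,1,0))/2) * isq
  have h010 : q (0,1,0) = 0 := by
    linear_combination (1/8 : ℂ) * e1 + (1/8 : ℂ) * e2 + (-1/8 + Complex.I/4) * e3 -
      (1/8 : ℂ) * e4 + (Complex.I/4) * e5 - (Complex.I/4) * e6 - (Complex.I/4) * e7 +
      ((q (0,1,0) - q (1,0,1))/2) * isq
  have h011 : q (0,1,1) = 0 := by
    linear_combination (1/8 : ℂ) * e1 + (-1/8 - Complex.I/4) * e2 + (1/8 : ℂ) * e3 -
      (1/8 : ℂ) * e4 + (Complex.I/4) * e5 - (Complex.I/4) * e6 + (Complex.I/4) * e7 +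
      ((q (0,1,1) - q (1,0,0))/2) * isq
  have h100 : q (1,0,0) = 0 := by
    linear_combination (1/8 : ℂ) * e1 + (-1/8 + Complex.I/4) * e2 + (1/8 : ℂ) * e3 -
      (1/8 : ℂ) * e4 - (Complex.I/4) * e5 + (Complex.I/4) * e6 - (Complex.I/4) * e7 +
      ((q (1,0,0) - q (0,1,1))/2) * isq
  have h101 : q (1,0,1) = 0 := by
    linear_combination (1/8 : ℂ) * e1 + (1/8 : ℂ) * e2 + (-1/8 - Complex.I/4) * e3 -
      (1/8 : ℂ) * e4 - (Complex.I/4) * e5 + (Complex.I/4) * e6 + (Complex.I/4) * e7 +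
      ((q (1,0,1) - q (0,1,0))/2) * isq
  have h110 : q (1,1,0) = 0 := by
    linear_combination (1/8 + Complex.I/4) * e1 - (1/8 : ℂ) * e2 - (1/8 : ℂ) * e3 +
      (1/8 : ℂ) * e4 - (Complex.I/4) * e5 - (Complex.I/4) * e6 + (Complex.I/4) * e7 +
      ((q (1,1,0) - q (0,0,1))/2) * isq
  intro v
  have hsum : ∑ p ∈ Sbox 1 1 1, q p * eChar p v =
      q (0,0,0) * (-((-1 : ℂ) + Complex.exp (Complex.I * ((v.1 : ℂ) + (v.2.1 : ℂ) + (v.2.2 : ℂ))))) := by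
    rw [sum_Sbox111, hA, h001, h010, h011, h100, h101, h110]
    have c0 : eChar (0,0,0) v = 1 := by
      unfold eChar; norm_num
    have c1 : eChar (1,1,1) v =
        Complex.exp (Complex.I * ((v.1 : ℂ) + (v.2.1 : ℂ) + (v.2.2 : ℂ))) := by
      unfold eChar; norm_num
    rw [c0, c1]
    ring
  rw [hsum, norm_mul, norm_neg]

/-- Proposition 3: the trigonometric polynomial f₄(α,β,γ) = |−1 + e^{i(α+β+γ)}|² = 2 − 2cos(α+β+γ)
is extremal in `Q(1,1,1)`. -/
theorem extremal_f4 (f₄ : ℝ × ℝ × ℝ → ℂ)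
    (hf : f₄ = fun v => (‖(-1 : ℂ) + Complex.exp (Complex.I * ((v.1 : ℂ) + (v.2.1 : ℂ) + (v.2.2 : ℂ)))‖ : ℂ) ^ 2) :
    ∀ g h : (ℝ × ℝ × ℝ) → ℂ, g ∈ QSet 1 1 1 → h ∈ QSet 1 1 1 → f₄ = g + h →
      ∃ c : ℝ, 0 ≤ c ∧ g = fun v => (c : ℂ) * f₄ v := by
  intro g h hg hh hsum
  obtain ⟨r, qg, hgdef⟩ := hg
  obtain ⟨s, qh, hhdef⟩ := hh
  -- each component of g vanishes on the zero set of f₄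
  have hzero : ∀ (j : Fin r) (a b : ℝ),
      ∑ p ∈ Sbox 1 1 1, qg j p * eChar p (a, b, -a-b) = 0 := by
    intro j a b
    have hf0 : f₄ (a, b, -a-b) = 0 := by
      rw [hf]
      simp only
      rw [show ((a:ℂ) + (b:ℂ) + ((-a-b : ℝ):ℂ)) = 0 by push_cast; ring]
      simp
    have hval := congrFun hsum (a, b, -a-b)
    rw [hf0, Pi.add_apply, hgdef, hhdef] at hval
    simp only at hval
    have hre : (0:ℝ) = (∑ j : Fin r, ‖∑ p ∈ Sbox 1 1 1, qg j p * eChar p (a,b,-a-b)‖^2) +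
        (∑ k : Fin s, ‖∑ p ∈ Sbox 1 1 1, qh k p * eChar p (a,b,-a-b)‖^2) := by
      simp only [← Complex.ofReal_pow, ← Complex.ofReal_sum, ← Complex.ofReal_add] at hval
      exact_mod_cast hval
    have hsg : (∑ j : Fin r, ‖∑ p ∈ Sbox 1 1 1, qg j p * eChar p (a,b,-a-b)‖^2) = 0 := by
      have h1 : (0:ℝ) ≤ ∑ j : Fin r, ‖∑ p ∈ Sbox 1 1 1, qg j p * eChar p (a,b,-a-b)‖^2 :=
        Finset.sum_nonneg fun _ _ => sq_nonneg _
      have h2 : (0:ℝ) ≤ ∑ k : Fin s, ‖∑ p ∈ Sbox 1 1 1, qh k p * eChar p (a,b,-a-b)‖^2 :=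
        Finset.sum_nonneg fun _ _ => sq_nonneg _
      linarith
    have := (Finset.sum_eq_zero_iff_of_nonneg (fun _ _ => sq_nonneg _)).mp hsg j
      (Finset.mem_univ j)
    have hnrm : ‖∑ p ∈ Sbox 1 1 1, qg j p * eChar p (a,b,-a-b)‖ = 0 := by
      exact pow_eq_zero_iff (by norm_num) |>.mp this
    exact norm_eq_zero.mp hnrm
  have hkey := fun j => vanish_key (qg j) (hzero j)
  refine ⟨∑ j : Fin r, ‖qg j (0,0,0)‖^2, Finset.sum_nonneg fun _ _ => sq_nonneg _, ?_⟩
  funext v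
  rw [hgdef, hf]
  simp only
  calc ∑ j : Fin r, (‖∑ p ∈ Sbox 1 1 1, qg j p * eChar p v‖ : ℂ) ^ 2
      = ∑ j : Fin r, ((‖qg j (0,0,0)‖ : ℂ)^2 *
          (‖(-1 : ℂ) + Complex.exp (Complex.I * ((v.1 : ℂ) + (v.2.1 : ℂ) + (v.2.2 : ℂ)))‖ : ℂ)^2) := by
        refine Finset.sum_congr rfl fun j _ => ?_
        rw [hkey j v]
        push_cast
        ring
    _ = ((∑ j : Fin r, ‖qg j (0,0,0)‖^2 : ℝ) : ℂ) *
          (‖(-1 : ℂ) + Complex.exp (Complex.I * ((v.1 : ℂ) + (v.2.1 : ℂ) + (v.2.2 : ℂ)))‖ : ℂ)^2 := by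
        rw [← Finset.sum_mul]
        push_cast
        ring
end
end

section
/- The Calderon transform maps σ(N₁,N₂,N₃) onto σ_P(2N₁,2N₂,2N₃): for every polynomial p ∈ σ_P(2N₁,2N₂,2N₃) there exist complex coefficients q(k,ℓ,m) (|k|≤N₁, |ℓ|≤N₂, |m|≤N₃) such that the trigonometric polynomial f(α,β,γ) = ∑ q(k,ℓ,m)·exp(i(kα+ℓβ+mγ)) belongs to σ(N₁,N₂,N₃) and p(x,y,z) = ∑ q(k,ℓ,m)·(x+i)^{N₁+k}(x−i)^{N₁−k}(y+i)^{N₂+ℓ}(y−i)^{N₂−ℓ}(z+i)^{N₃+m}(z−i)^{N₃−m} for all real x,y,z. -/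
open Complex ComplexOrder MvPolynomial

noncomputable section

/-- The lattice box `Δ(N₁,N₂,N₃)`. -/
def Dbox (N₁ N₂ N₃ : ℕ) : Finset (ℤ × ℤ × ℤ) :=
  Finset.Icc (-(N₁ : ℤ), -(N₂ : ℤ), -(N₃ : ℤ)) ((N₁ : ℤ), (N₂ : ℤ), (N₃ : ℤ))

/-- `σ(N₁,N₂,N₃)`: trig polynomials with frequencies in `Δ(N₁,N₂,N₃)` taking only real
nonnegative values. -/
def sigmaSet (N₁ N₂ N₃ : ℕ) : Set ((ℝ × ℝ × ℝ) → ℂ) :=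
  { f | (∃ q : ℤ × ℤ × ℤ → ℂ, f = fun v => ∑ δ ∈ Dbox N₁ N₂ N₃, q δ * eChar δ v) ∧
        ∀ v, 0 ≤ f v }

/-- The summand `(x+i)^{N₁+k}(x−i)^{N₁−k}(y+i)^{N₂+ℓ}(y−i)^{N₂−ℓ}(z+i)^{N₃+m}(z−i)^{N₃−m}` of
the Calderon transform. -/
def calderonTerm (N₁ N₂ N₃ : ℕ) (δ : ℤ × ℤ × ℤ) (x y z : ℝ) : ℂ :=
  ((x : ℂ) + Complex.I) ^ (((N₁ : ℤ) + δ.1).toNat) * ((x : ℂ) - Complex.I) ^ (((N₁ : ℤ) - δ.1).toNat) *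
  ((y : ℂ) + Complex.I) ^ (((N₂ : ℤ) + δ.2.1).toNat) * ((y : ℂ) - Complex.I) ^ (((N₂ : ℤ) - δ.2.1).toNat) *
  ((z : ℂ) + Complex.I) ^ (((N₃ : ℤ) + δ.2.2).toNat) * ((z : ℂ) - Complex.I) ^ (((N₃ : ℤ) - δ.2.2).toNat)


/-! Writing `u = x + i`, `v = x - i`, every monomial `x ^ a` with `a ≤ 2N` is a binary form of
degree `2N` in `u, v`; expanding the monomials of `p` this way gives the coefficients `q`.
At `x = cot (α/2)` one has `u = e^{iα/2} / sin (α/2)` and `v = e^{-iα/2} / sin (α/2)`, so the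
trigonometric polynomial with coefficients `q` equals
`sin^{2N₁}(α/2) sin^{2N₂}(β/2) sin^{2N₃}(γ/2) · p(cot (α/2), cot (β/2), cot (γ/2)) ≥ 0` wherever
the sines do not vanish. That set is dense, so nonnegativity holds everywhere by continuity. -/

theorem Polynomial.sum_range_coeff_mul_pow_mul_pow {K : Type*} [Field K] {P : Polynomial K}
    {n : ℕ} (hP : P.natDegree ≤ n) (u : K) {v : K} (hv : v ≠ 0) :
    ∑ j ∈ Finset.range (n + 1), P.coeff j * (u ^ j * v ^ (n - j)) = P.eval (u / v) * v ^ n := by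
  rw [Polynomial.eval_eq_sum_range' (Nat.lt_succ_of_le hP), Finset.sum_mul]
  refine Finset.sum_congr rfl fun j hj => ?_
  rw [div_pow, pow_sub₀ _ hv (Nat.lt_succ_iff.mp (Finset.mem_range.mp hj))]
  field_simp

theorem Finset.sum_Icc_neg_toNat {M : Type*} [AddCommMonoid M] (N : ℕ) (F : ℕ → ℕ → M) :
    ∑ k ∈ Finset.Icc (-(N : ℤ)) N, F ((N : ℤ) + k).toNat ((N : ℤ) - k).toNat
      = ∑ j ∈ Finset.range (2 * N + 1), F j (2 * N - j) := by
  refine Finset.sum_nbij' (fun k => ((N : ℤ) + k).toNat) (fun j => (j : ℤ) - N) ?_ ?_ ?_ ?_ ?_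
    <;> intro k hk <;> simp only [Finset.mem_Icc, Finset.mem_range] at hk ⊢
  · omega
  · omega
  · omega
  · omega
  · congr 1; omega

def calderonFactor (N : ℕ) (k : ℤ) (x : ℝ) : ℂ :=
  ((x : ℂ) + I) ^ ((N : ℤ) + k).toNat * ((x : ℂ) - I) ^ ((N : ℤ) - k).toNat

/-- The coefficient of `u ^ (N + k) * v ^ (N - k)` in
`x ^ a = ((u + v)/2) ^ a * ((u - v)/(2i)) ^ (2N - a)`, where `u = x + i` and `v = x - i`. -/
def calderonCoeff (N a : ℕ) (k : ℤ) : ℂ :=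
  ((Polynomial.X + 1) ^ a * (Polynomial.X - 1) ^ (2 * N - a) : Polynomial ℂ).coeff
      ((N : ℤ) + k).toNat / (2 ^ a * (2 * I) ^ (2 * N - a))

theorem sum_calderonCoeff_mul_calderonFactor {N a : ℕ} (ha : a ≤ 2 * N) (x : ℝ) :
    ∑ k ∈ Finset.Icc (-(N : ℤ)) N, calderonCoeff N a k * calderonFactor N k x = (x : ℂ) ^ a := by
  set P : Polynomial ℂ := (Polynomial.X + 1) ^ a * (Polynomial.X - 1) ^ (2 * N - a)
  have hP : P.natDegree ≤ 2 * N := by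
    refine (Polynomial.natDegree_mul_le).trans ?_
    have h₁ : ((Polynomial.X + 1) ^ a : Polynomial ℂ).natDegree ≤ a := by compute_degree
    have h₂ : ((Polynomial.X - 1) ^ (2 * N - a) : Polynomial ℂ).natDegree ≤ 2 * N - a := by
      compute_degree
    omega
  have hv : (x : ℂ) - I ≠ 0 := fun h => by simpa using congrArg Complex.im h
  have hc : (2 : ℂ) ^ a * (2 * I) ^ (2 * N - a) ≠ 0 := by simp [I_ne_zero]
  have hexpand : ∑ k ∈ Finset.Icc (-(N : ℤ)) N, calderonCoeff N a k * calderonFactor N k x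
      = P.eval (((x : ℂ) + I) / ((x : ℂ) - I)) * ((x : ℂ) - I) ^ (2 * N)
        / (2 ^ a * (2 * I) ^ (2 * N - a)) := by
    rw [← Polynomial.sum_range_coeff_mul_pow_mul_pow hP _ hv, Finset.sum_div,
      ← Finset.sum_Icc_neg_toNat N
        (fun i j => P.coeff i * (((x : ℂ) + I) ^ i * ((x : ℂ) - I) ^ j)
          / (2 ^ a * (2 * I) ^ (2 * N - a)))]
    refine Finset.sum_congr rfl fun k _ => ?_
    simp only [calderonCoeff, calderonFactor, P]
    ring
  have hhom : P.eval (((x : ℂ) + I) / ((x : ℂ) - I)) * ((x : ℂ) - I) ^ (2 * N)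
      = (2 * x) ^ a * (2 * I) ^ (2 * N - a) := by
    obtain ⟨b, hb⟩ := Nat.exists_eq_add_of_le ha
    simp only [P, Polynomial.eval_mul, Polynomial.eval_pow, Polynomial.eval_add,
      Polynomial.eval_sub, Polynomial.eval_X, Polynomial.eval_one, hb, Nat.add_sub_cancel_left]
    rw [pow_add, div_add_one hv, div_sub_one hv, div_pow, div_pow, mul_mul_mul_comm,
      div_mul_cancel₀ _ (pow_ne_zero _ hv), div_mul_cancel₀ _ (pow_ne_zero _ hv)]
    ring
  rw [hexpand, hhom, div_eq_iff hc]
  ring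

theorem calderonTerm_eq_mul (N₁ N₂ N₃ : ℕ) (δ : ℤ × ℤ × ℤ) (x y z : ℝ) :
    calderonTerm N₁ N₂ N₃ δ x y z
      = calderonFactor N₁ δ.1 x * (calderonFactor N₂ δ.2.1 y * calderonFactor N₃ δ.2.2 z) := by
  simp only [calderonTerm, calderonFactor]
  ring

theorem sum_Dbox_mul_mul {R : Type*} [NonUnitalNonAssocSemiring R] (N₁ N₂ N₃ : ℕ)
    (f g h : ℤ → R) :
    ∑ δ ∈ Dbox N₁ N₂ N₃, f δ.1 * (g δ.2.1 * h δ.2.2)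
      = (∑ k ∈ Finset.Icc (-(N₁ : ℤ)) N₁, f k) * ((∑ ℓ ∈ Finset.Icc (-(N₂ : ℤ)) N₂, g ℓ)
        * ∑ m ∈ Finset.Icc (-(N₃ : ℤ)) N₃, h m) := by
  rw [Dbox, Finset.Icc_prod_def, Finset.Icc_prod_def, Finset.sum_mul_sum, Finset.sum_mul_sum]
  simp only [Finset.sum_product, Finset.mul_sum]

def calderonPreimage (N₁ N₂ N₃ : ℕ) (p : MvPolynomial (Fin 3) ℝ) (δ : ℤ × ℤ × ℤ) : ℂ :=
  ∑ d ∈ p.support, ((p.coeff d : ℝ) : ℂ) *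
    (calderonCoeff N₁ (d 0) δ.1 * calderonCoeff N₂ (d 1) δ.2.1 * calderonCoeff N₃ (d 2) δ.2.2)

theorem sum_calderonPreimage_mul_calderonTerm {N₁ N₂ N₃ : ℕ} {p : MvPolynomial (Fin 3) ℝ}
    (hdeg : p.degreeOf 0 ≤ 2 * N₁ ∧ p.degreeOf 1 ≤ 2 * N₂ ∧ p.degreeOf 2 ≤ 2 * N₃) (x y z : ℝ) :
    ∑ δ ∈ Dbox N₁ N₂ N₃, calderonPreimage N₁ N₂ N₃ p δ * calderonTerm N₁ N₂ N₃ δ x y z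
      = ((eval ![x, y, z] p : ℝ) : ℂ) := by
  simp only [calderonPreimage, Finset.sum_mul, calderonTerm_eq_mul]
  rw [Finset.sum_comm, eval_eq', Complex.ofReal_sum]
  refine Finset.sum_congr rfl fun d hd => ?_
  have hmonomial : ∑ δ ∈ Dbox N₁ N₂ N₃,
      calderonCoeff N₁ (d 0) δ.1 * calderonFactor N₁ δ.1 x
        * ((calderonCoeff N₂ (d 1) δ.2.1 * calderonFactor N₂ δ.2.1 y)
        * (calderonCoeff N₃ (d 2) δ.2.2 * calderonFactor N₃ δ.2.2 z))
      = (x : ℂ) ^ d 0 * ((y : ℂ) ^ d 1 * (z : ℂ) ^ d 2) := by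
    rw [sum_Dbox_mul_mul N₁ N₂ N₃ (fun k => calderonCoeff N₁ (d 0) k * calderonFactor N₁ k x)
      (fun ℓ => calderonCoeff N₂ (d 1) ℓ * calderonFactor N₂ ℓ y)
      (fun m => calderonCoeff N₃ (d 2) m * calderonFactor N₃ m z),
      sum_calderonCoeff_mul_calderonFactor (degreeOf_le_iff.mp hdeg.1 d hd),
      sum_calderonCoeff_mul_calderonFactor (degreeOf_le_iff.mp hdeg.2.1 d hd),
      sum_calderonCoeff_mul_calderonFactor (degreeOf_le_iff.mp hdeg.2.2 d hd)]
  simp only [Fin.prod_univ_three, Matrix.cons_val_zero, Matrix.cons_val_one, Matrix.cons_val_two,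
    Matrix.head_cons, Matrix.tail_cons, Complex.ofReal_mul, Complex.ofReal_pow]
  rw [mul_assoc ((x : ℂ) ^ d 0), ← hmonomial, Finset.mul_sum]
  exact Finset.sum_congr rfl fun δ _ => by ring

theorem ofReal_cot_add_I {θ : ℝ} (hs : Real.sin θ ≠ 0) :
    ((Real.cot θ : ℝ) : ℂ) + I = exp (θ * I) / (Real.sin θ : ℂ) := by
  have hs' : sin (θ : ℂ) ≠ 0 := by rw [← ofReal_sin]; exact ofReal_ne_zero.mpr hs
  rw [Real.cot_eq_cos_div_sin, exp_mul_I, ofReal_div, ofReal_cos, ofReal_sin]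
  field_simp

theorem ofReal_cot_sub_I {θ : ℝ} (hs : Real.sin θ ≠ 0) :
    ((Real.cot θ : ℝ) : ℂ) - I = exp (-θ * I) / (Real.sin θ : ℂ) := by
  have hs' : sin (θ : ℂ) ≠ 0 := by rw [← ofReal_sin]; exact ofReal_ne_zero.mpr hs
  rw [Real.cot_eq_cos_div_sin, exp_mul_I, cos_neg, sin_neg, ofReal_div, ofReal_cos, ofReal_sin]
  field_simp
  ring

theorem calderonFactor_cot_half {N : ℕ} {k : ℤ} (hk : k ∈ Finset.Icc (-(N : ℤ)) N) {θ : ℝ}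
    (hs : Real.sin (θ / 2) ≠ 0) :
    calderonFactor N k (Real.cot (θ / 2))
      = exp (I * (k * θ)) / (Real.sin (θ / 2) : ℂ) ^ (2 * N) := by
  rw [Finset.mem_Icc] at hk
  obtain ⟨n, hn⟩ : ∃ n : ℕ, ((N : ℤ) + k).toNat = n := ⟨_, rfl⟩
  obtain ⟨m, hm⟩ : ∃ m : ℕ, ((N : ℤ) - k).toNat = m := ⟨_, rfl⟩
  have hnm : n + m = 2 * N := by omega
  have hkC : (k : ℂ) * 2 = n - m := by
    have : (k : ℤ) * 2 = n - m := by omega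
    exact_mod_cast this
  rw [calderonFactor, hn, hm, ofReal_cot_add_I hs, ofReal_cot_sub_I hs, div_pow, div_pow,
    div_mul_div_comm, ← pow_add, hnm, ← exp_nat_mul, ← exp_nat_mul, ← exp_add]
  congr 2
  push_cast
  linear_combination -(θ / 2 * I) * hkC

theorem eChar_eq_mul_calderonTerm {N₁ N₂ N₃ : ℕ} {δ : ℤ × ℤ × ℤ} (hδ : δ ∈ Dbox N₁ N₂ N₃)
    {v : ℝ × ℝ × ℝ} (h₁ : Real.sin (v.1 / 2) ≠ 0) (h₂ : Real.sin (v.2.1 / 2) ≠ 0)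
    (h₃ : Real.sin (v.2.2 / 2) ≠ 0) :
    eChar δ v = ((Real.sin (v.1 / 2) ^ (2 * N₁) * Real.sin (v.2.1 / 2) ^ (2 * N₂)
        * Real.sin (v.2.2 / 2) ^ (2 * N₃) : ℝ) : ℂ)
      * calderonTerm N₁ N₂ N₃ δ (Real.cot (v.1 / 2)) (Real.cot (v.2.1 / 2))
          (Real.cot (v.2.2 / 2)) := by
  rw [Dbox, Finset.Icc_prod_def, Finset.Icc_prod_def, Finset.mem_product, Finset.mem_product] at hδ
  rw [calderonTerm_eq_mul, calderonFactor_cot_half hδ.1 h₁, calderonFactor_cot_half hδ.2.1 h₂,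
    calderonFactor_cot_half hδ.2.2 h₃, eChar, mul_add, mul_add, exp_add, exp_add]
  have hs₁ := pow_ne_zero (2 * N₁) (ofReal_ne_zero.mpr h₁)
  have hs₂ := pow_ne_zero (2 * N₂) (ofReal_ne_zero.mpr h₂)
  have hs₃ := pow_ne_zero (2 * N₃) (ofReal_ne_zero.mpr h₃)
  simp only [ofReal_mul, ofReal_pow]
  field_simp

theorem sum_calderonPreimage_mul_eChar {N₁ N₂ N₃ : ℕ} {p : MvPolynomial (Fin 3) ℝ}
    (hdeg : p.degreeOf 0 ≤ 2 * N₁ ∧ p.degreeOf 1 ≤ 2 * N₂ ∧ p.degreeOf 2 ≤ 2 * N₃)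
    {v : ℝ × ℝ × ℝ} (h₁ : Real.sin (v.1 / 2) ≠ 0) (h₂ : Real.sin (v.2.1 / 2) ≠ 0)
    (h₃ : Real.sin (v.2.2 / 2) ≠ 0) :
    ∑ δ ∈ Dbox N₁ N₂ N₃, calderonPreimage N₁ N₂ N₃ p δ * eChar δ v
      = ((Real.sin (v.1 / 2) ^ (2 * N₁) * Real.sin (v.2.1 / 2) ^ (2 * N₂)
          * Real.sin (v.2.2 / 2) ^ (2 * N₃)
          * eval ![Real.cot (v.1 / 2), Real.cot (v.2.1 / 2), Real.cot (v.2.2 / 2)] p : ℝ) : ℂ) := by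
  rw [ofReal_mul, ← sum_calderonPreimage_mul_calderonTerm hdeg, Finset.mul_sum]
  refine Finset.sum_congr rfl fun δ hδ => ?_
  rw [eChar_eq_mul_calderonTerm hδ h₁ h₂ h₃]
  ring

theorem dense_setOf_sin_half_ne_zero : Dense {θ : ℝ | Real.sin (θ / 2) ≠ 0} := by
  have hzeros : {θ : ℝ | Real.sin (θ / 2) = 0} ⊆ Set.range (fun n : ℤ => 2 * (n * Real.pi)) := by
    intro θ hθ
    obtain ⟨n, hn⟩ := Real.sin_eq_zero_iff.mp hθ
    exact ⟨n, by linarith⟩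
  simpa only [Set.compl_ofPred] using ((Set.countable_range _).mono hzeros).dense_compl ℝ

theorem continuous_sum_mul_eChar (s : Finset (ℤ × ℤ × ℤ)) (q : ℤ × ℤ × ℤ → ℂ) :
    Continuous fun v => ∑ δ ∈ s, q δ * eChar δ v := by
  unfold eChar
  fun_prop

/-- Half of Proposition 5: the Calderon transform maps `σ(N₁,N₂,N₃)` *onto*
`σ_P(2N₁,2N₂,2N₃)`: every real polynomial `p`, of degree at most `2Nᵢ` in the `i`-th variable
and nonnegative on `ℝ³`, is the Calderon transform of some `f ∈ σ(N₁,N₂,N₃)`. -/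
theorem calderon_maps_sigma_onto_sigmaP (N₁ N₂ N₃ : ℕ) (p : MvPolynomial (Fin 3) ℝ)
    (hdeg : p.degreeOf 0 ≤ 2 * N₁ ∧ p.degreeOf 1 ≤ 2 * N₂ ∧ p.degreeOf 2 ≤ 2 * N₃)
    (hpos : ∀ x : Fin 3 → ℝ, 0 ≤ eval x p) :
    ∃ q : ℤ × ℤ × ℤ → ℂ,
      (fun v => ∑ δ ∈ Dbox N₁ N₂ N₃, q δ * eChar δ v) ∈ sigmaSet N₁ N₂ N₃ ∧
      ∀ x y z : ℝ,
        ((eval ![x, y, z] p : ℝ) : ℂ)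
          = ∑ δ ∈ Dbox N₁ N₂ N₃, q δ * calderonTerm N₁ N₂ N₃ δ x y z := by
  refine ⟨calderonPreimage N₁ N₂ N₃ p, ⟨⟨_, rfl⟩, fun v => ?_⟩,
    fun x y z => (sum_calderonPreimage_mul_calderonTerm hdeg x y z).symm⟩
  have hS := dense_setOf_sin_half_ne_zero
  refine (hS.prod (hS.prod hS)).induction (fun w ⟨h₁, h₂, h₃⟩ => ?_)
    (isClosed_le continuous_const (continuous_sum_mul_eChar _ _)) v
  dsimp only
  rw [sum_calderonPreimage_mul_eChar hdeg h₁ h₂ h₃, zero_le_real]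
  have hsin (θ : ℝ) (n : ℕ) : 0 ≤ Real.sin θ ^ (2 * n) := (even_two_mul n).pow_nonneg _
  exact mul_nonneg (mul_nonneg (mul_nonneg (hsin _ _) (hsin _ _)) (hsin _ _)) (hpos _)
end
end

section
/- Let f₀(α,β,γ) = 4 − cos(α+β+γ) − cos(−α+β+γ) − cos(α−β+γ) + cos(α+β−γ). For every real m with 0 < m ≤ 4 − 2^{3/2}, the trigonometric polynomial f₀ − m belongs to σ(1,1,1) but does not belong to Q(1,1,1). -/
open Complex ComplexOrder

noncomputable section

/-!
Expanding `cos θ = (e^{iθ} + e^{-iθ}) / 2` writes `f₀ - m` with coefficient `4 - m` at `0` and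
`±1/2` at each of the eight corners `2p - 1`, `p ∈ {0,1}³`, of the box `{-1,0,1}³`. Nonnegativity
reduces to `cos (y + z) cos x - sin (z - y) sin x ≤ √2`, which is Cauchy–Schwarz.

Suppose `f₀ - m = ∑ⱼ |Fⱼ|²` with `Fⱼ = ∑_{p ∈ {0,1}³} qⱼ(p) e_p`. Sampling on the grid `(2π/3) ℤ³`
separates the frequencies in `{-1,0,1}³`, so the coefficients of both sides agree. On the right, the
constant coefficient is `∑ⱼ ∑ₚ |qⱼ(p)|²`, and since `(p, 1 - p)` is the only pair in `{0,1}³` with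
difference `2p - 1`, the coefficient at that corner is `∑ⱼ qⱼ(p) conj (qⱼ(1 - p))`. By AM–GM its
modulus is at most `½ ∑ⱼ (|qⱼ(p)|² + |qⱼ(1 - p)|²)`; summing over the eight `p` gives
`8 · ½ ≤ 4 - m`, contradicting `m > 0`.
-/

open Finset ComplexConjugate

lemma mem_Sbox {N₁ N₂ N₃ : ℕ} {p : ℤ × ℤ × ℤ} :
    p ∈ Sbox N₁ N₂ N₃ ↔
      0 ≤ p.1 ∧ p.1 ≤ N₁ ∧ 0 ≤ p.2.1 ∧ p.2.1 ≤ N₂ ∧ 0 ≤ p.2.2 ∧ p.2.2 ≤ N₃ := by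
  simp only [Sbox, mem_Icc, Prod.le_def]
  tauto

lemma mem_Dbox {N₁ N₂ N₃ : ℕ} {p : ℤ × ℤ × ℤ} :
    p ∈ Dbox N₁ N₂ N₃ ↔
      -N₁ ≤ p.1 ∧ p.1 ≤ N₁ ∧ -N₂ ≤ p.2.1 ∧ p.2.1 ≤ N₂ ∧ -N₃ ≤ p.2.2 ∧ p.2.2 ≤ N₃ := by
  simp only [Dbox, mem_Icc, Prod.le_def]
  tauto

lemma sub_mem_Dbox {N₁ N₂ N₃ : ℕ} {a b : ℤ × ℤ × ℤ} (ha : a ∈ Sbox N₁ N₂ N₃)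
    (hb : b ∈ Sbox N₁ N₂ N₃) : a - b ∈ Dbox N₁ N₂ N₃ := by
  rw [mem_Sbox] at ha hb
  rw [mem_Dbox, Prod.fst_sub, Prod.snd_sub, Prod.fst_sub, Prod.snd_sub]
  omega

lemma one_sub_mem_Sbox {p : ℤ × ℤ × ℤ} (hp : p ∈ Sbox 1 1 1) : 1 - p ∈ Sbox 1 1 1 := by
  rw [mem_Sbox] at hp ⊢
  simp only [Prod.fst_sub, Prod.snd_sub, Prod.fst_one, Prod.snd_one]
  push_cast at *
  omega

lemma sub_eq_two_mul_sub_one_iff {a b p : ℤ × ℤ × ℤ} (ha : a ∈ Sbox 1 1 1)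
    (hb : b ∈ Sbox 1 1 1) (hp : p ∈ Sbox 1 1 1) : a - b = 2 * p - 1 ↔ a = p ∧ b = 1 - p := by
  rw [mem_Sbox] at ha hb hp
  simp only [Prod.ext_iff, Prod.fst_sub, Prod.snd_sub, Prod.fst_mul, Prod.snd_mul, Prod.fst_one,
    Prod.snd_one, Prod.fst_ofNat, Prod.snd_ofNat]
  push_cast at *
  omega

lemma sum_Sbox_one_sub {β : Type*} [AddCommMonoid β] (g : ℤ × ℤ × ℤ → β) :
    ∑ p ∈ Sbox 1 1 1, g (1 - p) = ∑ p ∈ Sbox 1 1 1, g p :=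
  sum_nbij' (1 - ·) (1 - ·) (fun _ => one_sub_mem_Sbox) (fun _ => one_sub_mem_Sbox)
    (fun _ _ => sub_sub_cancel 1 _) (fun _ _ => sub_sub_cancel 1 _) fun _ _ => rfl

lemma eChar_zero (v : ℝ × ℝ × ℝ) : eChar 0 v = 1 := by
  simp [eChar]

lemma eChar_add (δ η : ℤ × ℤ × ℤ) (v : ℝ × ℝ × ℝ) :
    eChar (δ + η) v = eChar δ v * eChar η v := by
  simp only [eChar, ← Complex.exp_add, Prod.fst_add, Prod.snd_add]
  push_cast
  ring_nf

lemma eChar_neg (δ : ℤ × ℤ × ℤ) (v : ℝ × ℝ × ℝ) : eChar (-δ) v = conj (eChar δ v) := by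
  simp only [eChar, ← Complex.exp_conj, map_mul, map_add, Complex.conj_I, Complex.conj_ofReal,
    map_intCast, Prod.fst_neg, Prod.snd_neg]
  push_cast
  ring_nf

lemma eChar_sub (δ η : ℤ × ℤ × ℤ) (v : ℝ × ℝ × ℝ) :
    eChar (δ - η) v = eChar δ v * conj (eChar η v) := by
  rw [sub_eq_add_neg, eChar_add, eChar_neg]

section Grid

open Real

def gridPoint (N : ℕ) (t : ℕ × ℕ × ℕ) : ℝ × ℝ × ℝ :=
  (2 * π * t.1 / N, 2 * π * t.2.1 / N, 2 * π * t.2.2 / N)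

lemma eChar_gridPoint (N : ℕ) (η : ℤ × ℤ × ℤ) (t : ℕ × ℕ × ℕ) :
    eChar η (gridPoint N t) =
      Complex.exp (2 * π * Complex.I * η.1 * t.1 / N) *
        Complex.exp (2 * π * Complex.I * η.2.1 * t.2.1 / N) *
        Complex.exp (2 * π * Complex.I * η.2.2 * t.2.2 / N) := by
  simp only [eChar, gridPoint, ← Complex.exp_add]
  push_cast
  ring_nf

lemma sum_range_exp_eq_ite {N : ℕ} {n : ℤ} (hn : |n| < N) :
    ∑ a ∈ range N, Complex.exp (2 * π * Complex.I * n * a / N) =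
      if n = 0 then (N : ℂ) else 0 := by
  have hN : N ≠ 0 := by rintro rfl; exact (abs_nonneg n).not_gt (by exact_mod_cast hn)
  split_ifs with h0
  · simp [h0]
  set ζ := Complex.exp (2 * π * Complex.I / N)
  have hζ : IsPrimitiveRoot ζ N := Complex.isPrimitiveRoot_exp N hN
  have hterm (a : ℕ) : Complex.exp (2 * π * Complex.I * n * a / N) = (ζ ^ n) ^ a := by
    rw [← Complex.exp_int_mul, ← Complex.exp_nat_mul]
    ring_nf
  have hne : ζ ^ n ≠ 1 := fun h =>
    h0 (Int.eq_zero_of_abs_lt_dvd ((hζ.zpow_eq_one_iff_dvd n).1 h) hn)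
  simp_rw [hterm, geom_sum_eq hne, ← zpow_natCast, ← zpow_mul, mul_comm n, zpow_mul,
    zpow_natCast, hζ.pow_eq_one, one_zpow, sub_self, zero_div]

lemma sum_eChar_gridPoint {N : ℕ} {η : ℤ × ℤ × ℤ}
    (h₁ : |η.1| < N) (h₂ : |η.2.1| < N) (h₃ : |η.2.2| < N) :
    ∑ t ∈ range N ×ˢ range N ×ˢ range N, eChar η (gridPoint N t) =
      if η = 0 then (N : ℂ) ^ 3 else 0 := by
  simp only [sum_product, eChar_gridPoint, ← mul_sum, ← sum_mul, sum_range_exp_eq_ite h₁,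
    sum_range_exp_eq_ite h₂, sum_range_exp_eq_ite h₃, Prod.ext_iff, Prod.fst_zero, Prod.snd_zero]
  split_ifs <;> simp_all [pow_three, mul_assoc]

lemma sum_eChar_sub_gridPoint {n : ℕ} {η δ : ℤ × ℤ × ℤ} (hη : η ∈ Dbox n n n)
    (hδ : δ ∈ Dbox n n n) :
    ∑ t ∈ range (2 * n + 1) ×ˢ range (2 * n + 1) ×ˢ range (2 * n + 1),
        eChar (η - δ) (gridPoint (2 * n + 1) t) =
      if η = δ then ((2 * n + 1 : ℕ) : ℂ) ^ 3 else 0 := by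
  rw [mem_Dbox] at hη hδ
  rw [sum_eChar_gridPoint] <;> simp only [sub_eq_zero, Prod.fst_sub, Prod.snd_sub, abs_lt] <;>
    push_cast <;> omega

lemma sum_gridPoint_mul_eChar_neg {n : ℕ} (a : ℤ × ℤ × ℤ → ℂ) {δ : ℤ × ℤ × ℤ}
    (hδ : δ ∈ Dbox n n n) :
    ∑ t ∈ range (2 * n + 1) ×ˢ range (2 * n + 1) ×ˢ range (2 * n + 1),
        (∑ η ∈ Dbox n n n, a η * eChar η (gridPoint (2 * n + 1) t)) *
          eChar (-δ) (gridPoint (2 * n + 1) t) =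
      ((2 * n + 1 : ℕ) : ℂ) ^ 3 * a δ := by
  simp_rw [sum_mul, mul_assoc, ← eChar_add, ← sub_eq_add_neg]
  rw [sum_comm]
  simp_rw [← mul_sum]
  rw [sum_congr rfl fun η hη => by rw [sum_eChar_sub_gridPoint hη hδ]]
  simp [hδ, mul_comm]

theorem eq_of_sum_mul_eChar_eq {n : ℕ} {a b : ℤ × ℤ × ℤ → ℂ}
    (h : ∀ v, ∑ η ∈ Dbox n n n, a η * eChar η v = ∑ η ∈ Dbox n n n, b η * eChar η v)
    {δ : ℤ × ℤ × ℤ} (hδ : δ ∈ Dbox n n n) : a δ = b δ := by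
  have := sum_gridPoint_mul_eChar_neg a hδ
  simp_rw [h, sum_gridPoint_mul_eChar_neg b hδ] at this
  exact (mul_left_cancel₀ (by positivity) this).symm

end Grid

lemma two_mul_norm_sum_mul_conj_le {ι : Type*} (s : Finset ι) (u w : ι → ℂ) :
    2 * ‖∑ j ∈ s, u j * conj (w j)‖ ≤ ∑ j ∈ s, (Complex.normSq (u j) + Complex.normSq (w j)) := by
  calc 2 * ‖∑ j ∈ s, u j * conj (w j)‖ ≤ 2 * ∑ j ∈ s, ‖u j‖ * ‖w j‖ := by
        refine mul_le_mul_of_nonneg_left ((norm_sum_le _ _).trans_eq ?_) zero_le_two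
        simp
    _ ≤ ∑ j ∈ s, (Complex.normSq (u j) + Complex.normSq (w j)) := by
        rw [mul_sum]
        refine sum_le_sum fun j _ => ?_
        simp only [Complex.normSq_eq_norm_sq, ← mul_assoc]
        exact two_mul_le_add_sq _ _

section SumOfSquares

variable {r : ℕ} (S : Finset (ℤ × ℤ × ℤ)) (q : Fin r → ℤ × ℤ × ℤ → ℂ)

def autocorr (δ : ℤ × ℤ × ℤ) : ℂ :=
  ∑ j, ∑ a ∈ S, ∑ b ∈ S, if a - b = δ then q j a * conj (q j b) else 0

lemma sq_norm_sum_mul_eChar (c : ℤ × ℤ × ℤ → ℂ) (v : ℝ × ℝ × ℝ) :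
    (‖∑ p ∈ S, c p * eChar p v‖ : ℂ) ^ 2 =
      ∑ a ∈ S, ∑ b ∈ S, c a * conj (c b) * eChar (a - b) v := by
  rw [← Complex.mul_conj', map_sum, sum_mul_sum]
  simp_rw [map_mul, eChar_sub]
  exact sum_congr rfl fun a _ => sum_congr rfl fun b _ => by ring

lemma sum_sq_norm_eq_sum_autocorr {D : Finset (ℤ × ℤ × ℤ)}
    (hS : ∀ a ∈ S, ∀ b ∈ S, a - b ∈ D) (v : ℝ × ℝ × ℝ) :
    ∑ j, (‖∑ p ∈ S, q j p * eChar p v‖ : ℂ) ^ 2 = ∑ δ ∈ D, autocorr S q δ * eChar δ v := by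
  simp_rw [sq_norm_sum_mul_eChar, autocorr, sum_mul, ite_mul, zero_mul]
  symm
  rw [sum_comm]
  refine sum_congr rfl fun j _ => ?_
  rw [sum_comm]
  refine sum_congr rfl fun a ha => ?_
  rw [sum_comm]
  refine sum_congr rfl fun b hb => ?_
  rw [sum_ite_eq, if_pos (hS a ha b hb)]

lemma autocorr_zero : autocorr S q 0 = ∑ j, ∑ p ∈ S, (Complex.normSq (q j p) : ℂ) := by
  simp_rw [autocorr, sub_eq_zero]
  refine sum_congr rfl fun j _ => sum_congr rfl fun a ha => ?_
  rw [sum_ite_eq, if_pos ha, Complex.mul_conj]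

lemma autocorr_two_mul_sub_one {p : ℤ × ℤ × ℤ} (hp : p ∈ Sbox 1 1 1) :
    autocorr (Sbox 1 1 1) q (2 * p - 1) = ∑ j, q j p * conj (q j (1 - p)) := by
  refine sum_congr rfl fun j _ => ?_
  calc ∑ a ∈ Sbox 1 1 1, ∑ b ∈ Sbox 1 1 1,
        (if a - b = 2 * p - 1 then q j a * conj (q j b) else 0)
      = ∑ a ∈ Sbox 1 1 1, ∑ b ∈ Sbox 1 1 1,
          if a = p then (if b = 1 - p then q j a * conj (q j b) else 0) else 0 :=
        sum_congr rfl fun a ha => sum_congr rfl fun b hb => by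
          simp only [sub_eq_two_mul_sub_one_iff ha hb hp, ite_and]
    _ = q j p * conj (q j (1 - p)) := by simp [hp, one_sub_mem_Sbox hp]

theorem sum_norm_autocorr_two_mul_sub_one_le :
    ∑ p ∈ Sbox 1 1 1, ‖autocorr (Sbox 1 1 1) q (2 * p - 1)‖ ≤
      (autocorr (Sbox 1 1 1) q 0).re := by
  have h := calc
    2 * ∑ p ∈ Sbox 1 1 1, ‖autocorr (Sbox 1 1 1) q (2 * p - 1)‖
        = ∑ p ∈ Sbox 1 1 1, 2 * ‖∑ j, q j p * conj (q j (1 - p))‖ := by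
          rw [mul_sum]
          exact sum_congr rfl fun p hp => by rw [autocorr_two_mul_sub_one q hp]
    _ ≤ ∑ p ∈ Sbox 1 1 1, ∑ j, (Complex.normSq (q j p) + Complex.normSq (q j (1 - p))) :=
          sum_le_sum fun p _ => two_mul_norm_sum_mul_conj_le _ _ _
    _ = 2 * (autocorr (Sbox 1 1 1) q 0).re := by
          rw [autocorr_zero, sum_comm]
          simp only [sum_add_distrib]
          rw [sum_congr rfl fun j _ => sum_Sbox_one_sub fun p => Complex.normSq (q j p)]
          simp [Complex.re_sum, two_mul]
  linarith

end SumOfSquares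

theorem sum_norm_coeff_two_mul_sub_one_le_of_mem_QSet {c : ℤ × ℤ × ℤ → ℂ}
    (hc : (fun v => ∑ δ ∈ Dbox 1 1 1, c δ * eChar δ v) ∈ QSet 1 1 1) :
    ∑ p ∈ Sbox 1 1 1, ‖c (2 * p - 1)‖ ≤ (c 0).re := by
  obtain ⟨r, q, hq⟩ := hc
  have hcoeff {δ : ℤ × ℤ × ℤ} (hδ : δ ∈ Dbox 1 1 1) : c δ = autocorr (Sbox 1 1 1) q δ :=
    eq_of_sum_mul_eChar_eq (fun v => (congrFun hq v).trans
      (sum_sq_norm_eq_sum_autocorr _ q (fun _ ha _ hb => sub_mem_Dbox ha hb) v)) hδ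
  have hcorner {p : ℤ × ℤ × ℤ} (hp : p ∈ Sbox 1 1 1) :
      c (2 * p - 1) = autocorr (Sbox 1 1 1) q (2 * p - 1) :=
    hcoeff ((show p - (1 - p) = 2 * p - 1 by ring) ▸ sub_mem_Dbox hp (one_sub_mem_Sbox hp))
  rw [hcoeff (by simp [mem_Dbox]), sum_congr rfl fun p hp => by rw [hcorner hp]]
  exact sum_norm_autocorr_two_mul_sub_one_le q

section Example

open Real

def cosCoeff (ν : ℤ × ℤ × ℤ) : ℤ × ℤ × ℤ → ℂ :=
  Pi.single ν (1 / 2) + Pi.single (-ν) (1 / 2)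

lemma sum_cosCoeff_mul_eChar {D : Finset (ℤ × ℤ × ℤ)} {ν : ℤ × ℤ × ℤ} (hν : ν ∈ D)
    (hν' : -ν ∈ D) (v : ℝ × ℝ × ℝ) :
    ∑ δ ∈ D, cosCoeff ν δ * eChar δ v = Real.cos (ν.1 * v.1 + ν.2.1 * v.2.1 + ν.2.2 * v.2.2) := by
  simp only [cosCoeff, Pi.add_apply, Pi.single_apply, add_mul, ite_mul, zero_mul, sum_add_distrib,
    sum_ite_eq', hν, hν', if_true]
  simp only [eChar, Complex.ofReal_cos, Complex.cos, Prod.fst_neg, Prod.snd_neg]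
  push_cast
  ring_nf

def f0SubCoeff (m : ℝ) : ℤ × ℤ × ℤ → ℂ :=
  Pi.single 0 (4 - m) - cosCoeff (1, 1, 1) - cosCoeff (-1, 1, 1) - cosCoeff (1, -1, 1) +
    cosCoeff (1, 1, -1)

lemma f0_sub_eq_sum_f0SubCoeff_mul_eChar (m : ℝ) (v : ℝ × ℝ × ℝ) :
    (((4 : ℝ) - Real.cos (v.1 + v.2.1 + v.2.2) - Real.cos (-v.1 + v.2.1 + v.2.2)
      - Real.cos (v.1 - v.2.1 + v.2.2) + Real.cos (v.1 + v.2.1 - v.2.2) : ℝ) : ℂ) - m =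
      ∑ δ ∈ Dbox 1 1 1, f0SubCoeff m δ * eChar δ v := by
  simp only [f0SubCoeff, Pi.add_apply, Pi.sub_apply, add_mul, sub_mul, sum_add_distrib,
    sum_sub_distrib, Pi.single_apply, ite_mul, zero_mul, sum_ite_eq']
  simp (disch := simp [mem_Dbox]) only [sum_cosCoeff_mul_eChar]
  simp [mem_Dbox, eChar_zero]
  ring_nf

lemma f0SubCoeff_zero (m : ℝ) : f0SubCoeff m 0 = 4 - m := by
  simp [f0SubCoeff, cosCoeff]

lemma norm_f0SubCoeff_two_mul_sub_one (m : ℝ) {p : ℤ × ℤ × ℤ} (hp : p ∈ Sbox 1 1 1) :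
    ‖f0SubCoeff m (2 * p - 1)‖ = 1 / 2 := by
  have hS : Sbox 1 1 1 =
      {(0, 0, 0), (0, 0, 1), (0, 1, 0), (0, 1, 1), (1, 0, 0), (1, 0, 1), (1, 1, 0), (1, 1, 1)} := by
    decide
  rw [hS] at hp
  simp only [mem_insert, mem_singleton] at hp
  rcases hp with rfl | rfl | rfl | rfl | rfl | rfl | rfl | rfl <;>
    norm_num [f0SubCoeff, cosCoeff, Pi.single_apply, Prod.ext_iff]

lemma cos_add_cos_add_cos_sub_cos_le (x y z : ℝ) :
    Real.cos (x + y + z) + Real.cos (-x + y + z) + Real.cos (x - y + z) - Real.cos (x + y - z)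
      ≤ 2 * √2 := by
  have hsum : Real.cos (x + y + z) + Real.cos (-x + y + z) + Real.cos (x - y + z)
      - Real.cos (x + y - z) =
        2 * (Real.cos (y + z) * Real.cos x - Real.sin (z - y) * Real.sin x) := by
    rw [add_sub_assoc, Real.cos_add_cos, Real.cos_sub_cos]
    ring_nf
  set u := Real.cos (y + z) * Real.cos x - Real.sin (z - y) * Real.sin x
  have hu : u ^ 2 ≤ 2 := by
    nlinarith [sq_nonneg (Real.cos (y + z) * Real.sin x + Real.sin (z - y) * Real.cos x),
      Real.sin_sq_add_cos_sq x, Real.cos_sq_le_one (y + z), Real.sin_sq_le_one (z - y)]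
  linarith [(le_abs_self u).trans (abs_le_sqrt hu)]

lemma two_rpow_three_halves : (2 : ℝ) ^ ((3 : ℝ) / 2) = 2 * √2 := by
  rw [show (3 : ℝ) / 2 = 1 + 1 / 2 by norm_num, rpow_add two_pos, rpow_one, ← sqrt_eq_rpow]

end Example

/-- Example 3: with
`f₀(α,β,γ) = 4 − cos(α+β+γ) − cos(−α+β+γ) − cos(α−β+γ) + cos(α+β−γ)`, the polynomial
`f₀ − m` belongs to `σ(1,1,1)` but not to `Q(1,1,1)` for every `0 < m ≤ 4 − 2^{3/2}`. -/
theorem f0_sub_m_in_sigma_not_Q (f₀ : ℝ × ℝ × ℝ → ℂ)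
    (hf₀ : f₀ = fun v => (((4 : ℝ)
      - Real.cos (v.1 + v.2.1 + v.2.2) - Real.cos (-v.1 + v.2.1 + v.2.2)
      - Real.cos (v.1 - v.2.1 + v.2.2) + Real.cos (v.1 + v.2.1 - v.2.2) : ℝ) : ℂ))
    (m : ℝ) (hm0 : 0 < m) (hm : m ≤ 4 - (2 : ℝ) ^ ((3 : ℝ) / 2)) :
    (fun v => f₀ v - (m : ℂ)) ∈ sigmaSet 1 1 1 ∧
    (fun v => f₀ v - (m : ℂ)) ∉ QSet 1 1 1 := by
  subst hf₀
  have hrep : (fun v => _ - (m : ℂ)) = fun v => ∑ δ ∈ Dbox 1 1 1, f0SubCoeff m δ * eChar δ v :=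
    funext (f0_sub_eq_sum_f0SubCoeff_mul_eChar m)
  refine ⟨⟨⟨f0SubCoeff m, hrep⟩, fun v => ?_⟩, fun hQ => ?_⟩
  · dsimp only
    rw [← Complex.ofReal_sub, Complex.zero_le_real]
    linarith [cos_add_cos_add_cos_sub_cos_le v.1 v.2.1 v.2.2, two_rpow_three_halves]
  · have h := sum_norm_coeff_two_mul_sub_one_le_of_mem_QSet (hrep ▸ hQ)
    rw [sum_congr rfl fun p hp => norm_f0SubCoeff_two_mul_sub_one m hp, f0SubCoeff_zero] at h
    rw [sum_const, show #(Sbox 1 1 1) = 8 by decide] at h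
    norm_num at h
    linarith
end
end
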